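/- Fix integers m, n with 2 < m ≤ n. Then the double sum over pairs (i,j) with 1 ≤ i ≤ m, 1 ≤ j ≤ n, (i,j) ≠ (m,n), of C(m+n−i−j, m−i) multiplied by the 2×2 determinant with rows [C(i+n−2, i−1), C(m+j−2, m−1)] and [C(i+n−3, i−2), C(m+j−3, m−2)], equals C(m+n−2, m−1)². -/

import Mathlib

/-- Generalized binomial coefficient `C(s,a)` for integers `s, a`:
`C(s,a) = s(s-1)⋯(s-a+1)/a!` if `a ≥ 0`, and `0` if `a < 0`. -/
noncomputable def C (s a : ℤ) : ℚ :=
  if a < 0 then 0 else (∏ i ∈ Finset.range a.toNat, ((s : ℚ) - i)) / (a.toNat.factorial : ℚ)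

/-!
Summing over `j` first, each row is a Chu–Vandermonde convolution of two "multiset" binomial
coefficients, `∑_{i+j=N} C(a+i,a) C(b+j,b) = C(a+b+1+N, a+b+1)` (the Vandermonde identity at
negative upper arguments). The row sums obtained this way are the successive differences of
`F(i) = C(i+n-2, i-1) C(2m+n-i-2, n-1)`, so the double sum telescopes to
`F(m) - F(0) = C(m+n-2, m-1) C(m+n-2, n-1)`, and the symmetry of binomial coefficients finishes.
The excluded corner `(m, n)` contributes `0` anyway.
-/

open Finset

theorem Ring.multichoose_add {R : Type*} [CommRing R] [BinomialRing R] (r s : R) (k : ℕ) :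
    multichoose (r + s) k = ∑ ij ∈ antidiagonal k, multichoose r ij.1 * multichoose s ij.2 := by
  have h (x : R) (n : ℕ) : multichoose x n = Int.negOnePow n • choose (-x) n := by
    rw [choose_neg', smul_smul, ← Int.negOnePow_add, ← two_mul, Int.negOnePow_two_mul, one_smul]
  simp only [h, neg_add, smul_mul_smul_comm]
  rw [add_choose_eq k (Commute.all (-r) (-s)), smul_sum]
  refine sum_congr rfl fun ij hij => ?_
  rw [← Int.negOnePow_add, ← Nat.cast_add, mem_antidiagonal.mp hij]

theorem Nat.sum_antidiagonal_add_choose_mul_add_choose (a b N : ℕ) :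
    ∑ ij ∈ antidiagonal N, (a + ij.1).choose a * (b + ij.2).choose b =
      (a + b + 1 + N).choose (a + b + 1) := by
  have h (c k : ℕ) : ((c + k).choose c : ℤ) = Ring.multichoose ((c + 1 : ℕ) : ℤ) k := by
    rw [Ring.multichoose_eq, Nat.choose_symm_add, ← Ring.choose_natCast]
    push_cast; ring_nf
  apply Nat.cast_injective (R := ℤ)
  simp only [Nat.cast_sum, Nat.cast_mul, h, ← Ring.multichoose_add, ← Nat.cast_add]
  ring_nf

lemma C_of_neg (s : ℤ) {a : ℤ} (ha : a < 0) : C s a = 0 := if_pos ha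

lemma C_natCast (s a : ℕ) : C s a = s.choose a := by
  rw [C, if_neg (by omega), Int.toNat_natCast, Int.cast_natCast,
    ← descPochhammer_eval_eq_prod_range, descPochhammer_eval_eq_descFactorial,
    Nat.descFactorial_eq_factorial_mul_choose, Nat.cast_mul,
    mul_div_cancel_left₀ _ (by positivity)]

lemma C_symm {s a : ℤ} (ha : 0 ≤ a) (has : a ≤ s) : C s (s - a) = C s a := by
  lift s to ℕ using by omega
  lift a to ℕ using ha
  rw [← Nat.cast_sub (by omega), C_natCast, C_natCast, Nat.choose_symm (by omega)]

lemma sum_Icc_one_eq_sum_range {M : Type*} [AddCommMonoid M] (f : ℤ → M) (N : ℕ) :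
    ∑ j ∈ Icc (1 : ℤ) N, f j = ∑ k ∈ range N, f (k + 1) := by
  rw [Int.Icc_eq_finset_map, sum_map]
  simp [add_comm]

lemma sum_Icc_one_sub_pred {M : Type*} [AddCommGroup M] (F : ℤ → M) {m : ℤ} (hm : 0 ≤ m) :
    ∑ i ∈ Icc 1 m, (F i - F (i - 1)) = F m - F 0 := by
  lift m to ℕ using hm
  simpa [sum_Icc_one_eq_sum_range] using sum_range_sub (fun k : ℕ => F k) m

lemma sum_Icc_C_mul_C {a b n : ℤ} (ha : 0 ≤ a) (hb : 0 ≤ b) (hn : 1 ≤ n) :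
    ∑ j ∈ Icc 1 n, C (a + n - j) a * C (b + j - 1) b = C (a + b + n) (n - 1) := by
  lift a to ℕ using ha
  lift b to ℕ using hb
  obtain ⟨N, rfl⟩ : ∃ N : ℕ, n = N + 1 := ⟨(n - 1).toNat, by omega⟩
  have hterm : ∀ k ∈ range (N + 1),
      C (a + (N + 1 : ℕ) - (k + 1 : ℤ)) a * C (b + (k + 1 : ℤ) - 1) b =
        ((b + k).choose b * (a + (N - k)).choose a : ℕ) := by
    intro k hk
    have hkN : k ≤ N := Nat.lt_succ_iff.mp (mem_range.mp hk)
    rw [show (a : ℤ) + (N + 1 : ℕ) - (k + 1 : ℤ) = (a + (N - k) : ℕ) by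
        push_cast [hkN]; ring,
      show (b : ℤ) + (k + 1 : ℤ) - 1 = (b + k : ℕ) by push_cast; ring, C_natCast, C_natCast]
    push_cast; ring
  rw [← Nat.cast_succ, sum_Icc_one_eq_sum_range, sum_congr rfl hterm, ← Nat.cast_sum,
    ← Nat.sum_antidiagonal_eq_sum_range_succ (fun i j => (b + i).choose b * (a + j).choose a),
    Nat.sum_antidiagonal_add_choose_mul_add_choose,
    show (a : ℤ) + b + (N + 1 : ℕ) = (b + a + 1 + N : ℕ) by push_cast; ring,
    show ((N + 1 : ℕ) : ℤ) - 1 = (N : ℕ) by push_cast; ring, C_natCast, Nat.choose_symm_add]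

noncomputable def rowsPartialSum (m n i : ℤ) : ℚ :=
  C (i + n - 2) (i - 1) * C (2 * m + n - i - 2) (n - 1)

lemma sum_Icc_row {m n i : ℤ} (hm : 2 ≤ m) (hn : 1 ≤ n) (hi : i ≤ m) :
    ∑ j ∈ Icc 1 n, C (m + n - i - j) (m - i) *
        (C (i + n - 2) (i - 1) * C (m + j - 3) (m - 2)
          - C (m + j - 2) (m - 1) * C (i + n - 3) (i - 2))
      = rowsPartialSum m n i - rowsPartialSum m n (i - 1) := by
  have hsplit : ∀ j ∈ Icc 1 n, C (m + n - i - j) (m - i) *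
        (C (i + n - 2) (i - 1) * C (m + j - 3) (m - 2)
          - C (m + j - 2) (m - 1) * C (i + n - 3) (i - 2))
      = C (i + n - 2) (i - 1) * (C ((m - i) + n - j) (m - i) * C ((m - 2) + j - 1) (m - 2))
        - C (i + n - 3) (i - 2) * (C ((m - i) + n - j) (m - i) * C ((m - 1) + j - 1) (m - 1)) := by
    intro j _
    ring_nf
  rw [sum_congr rfl hsplit, sum_sub_distrib, ← mul_sum, ← mul_sum,
    sum_Icc_C_mul_C (by omega) (by omega) hn, sum_Icc_C_mul_C (by omega) (by omega) hn,
    rowsPartialSum, rowsPartialSum]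
  ring_nf

theorem multiplicity_simplification (m n : ℤ) (hm : 2 < m) (hmn : m ≤ n) :
    (∑ i ∈ Finset.Icc (1 : ℤ) m, ∑ j ∈ Finset.Icc (1 : ℤ) n,
      if (i, j) ≠ (m, n) then
        C (m + n - i - j) (m - i) *
          (C (i + n - 2) (i - 1) * C (m + j - 3) (m - 2)
            - C (m + j - 2) (m - 1) * C (i + n - 3) (i - 2))
      else 0)
      = C (m + n - 2) (m - 1) ^ 2 := by
  refine (sum_congr rfl fun i _ => sum_congr rfl fun j _ =>
    ite_eq_left_iff.mpr fun hcorner => ?_).trans ?_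
  · obtain ⟨rfl, rfl⟩ := Prod.ext_iff.mp (not_not.mp hcorner)
    ring_nf
  rw [sum_congr rfl fun i hi => sum_Icc_row (by omega) (by omega) (mem_Icc.mp hi).2,
    sum_Icc_one_sub_pred _ (by omega), rowsPartialSum, rowsPartialSum,
    C_of_neg _ (by omega : (0 : ℤ) - 1 < 0), show 2 * m + n - m - 2 = m + n - 2 by ring,
    show n - 1 = (m + n - 2) - (m - 1) by ring, C_symm (by omega) (by omega)]
  ring
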